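/- arXiv:1710.05119 — 5 statements merged into one kernel-verified Lean document; each statement's English description precedes it below -/
import Mathlib

section
/- If g:(0,2π)→ℝ is measurable, non-negative, non-increasing, and x·g(x) is integrable on (0,2π), then ∫₀^{2π} g(x) sin(x) dx ≥ 0, with equality only if g is constant (almost everywhere). -/
/-!
Since `sin (x + π) = -sin x`, folding `(π, 2π)` onto `(0, π)` turns the integral into
`∫₀^π (g x - g (x + π)) sin x`, whose integrand is non-negative because `g` is non-increasing.
If it vanishes, `g x = g (x + π)` for a.e. `x ∈ (0, π)`, and monotonicity squeezes both values
to `g π`. Integrability of `g sin` comes from `|sin x| ≤ |x|`, and measurability from monotonicity.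
-/

open MeasureTheory Set Real

theorem MeasureTheory.IntegrableOn.mul_sin_of_id_mul {g : ℝ → ℝ} {s : Set ℝ}
    (hg : AEMeasurable g (volume.restrict s)) (h : IntegrableOn (fun x => x * g x) s) :
    IntegrableOn (fun x => g x * sin x) s :=
  h.norm.mono' (hg.mul measurable_sin.aemeasurable).aestronglyMeasurable <| ae_of_all _ fun x => by
    simpa [abs_mul, mul_comm |g x|] using
      mul_le_mul_of_nonneg_right abs_sin_le_abs (abs_nonneg (g x))

theorem add_mem_uIcc_add_two_mul (a p : ℝ) : a + p ∈ uIcc a (a + 2 * p) := by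
  rcases le_total 0 p with hp | hp
  exacts [mem_uIcc_of_le (by linarith) (by linarith), mem_uIcc_of_ge (by linarith) (by linarith)]

namespace Function.Antiperiodic

variable {g h : ℝ → ℝ} {a p : ℝ}

theorem intervalIntegrable_sub_comp_add_mul (hh : Antiperiodic h p)
    (hgh : IntervalIntegrable (fun x => g x * h x) volume a (a + 2 * p)) :
    IntervalIntegrable (fun x => (g x - g (x + p)) * h x) volume a (a + p) := by
  have hleft := hgh.mono_set (uIcc_subset_uIcc_left (add_mem_uIcc_add_two_mul a p))
  have hright := hgh.mono_set (uIcc_subset_uIcc (add_mem_uIcc_add_two_mul a p) right_mem_uIcc)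
  have hshift : IntervalIntegrable (fun x => g (x + p) * h (x + p)) volume a (a + p) := by
    simpa [two_mul, ← add_assoc] using hright.comp_add_right p
  convert hleft.add hshift using 2 with x
  simp only [hh x]
  ring

theorem intervalIntegral_mul_eq_integral_sub_comp_add_mul (hh : Antiperiodic h p)
    (hgh : IntervalIntegrable (fun x => g x * h x) volume a (a + 2 * p)) :
    ∫ x in a..a + 2 * p, g x * h x = ∫ x in a..a + p, (g x - g (x + p)) * h x := by
  have hleft := hgh.mono_set (uIcc_subset_uIcc_left (add_mem_uIcc_add_two_mul a p))
  have hright := hgh.mono_set (uIcc_subset_uIcc (add_mem_uIcc_add_two_mul a p) right_mem_uIcc)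
  have hshift : IntervalIntegrable (fun x => g (x + p) * h (x + p)) volume a (a + p) := by
    simpa [two_mul, ← add_assoc] using hright.comp_add_right p
  rw [← intervalIntegral.integral_add_adjacent_intervals hleft hright,
    show a + 2 * p = a + p + p by ring, ← intervalIntegral.integral_comp_add_right,
    ← intervalIntegral.integral_add hleft hshift]
  congr 1 with x
  rw [hh x]
  ring

end Function.Antiperiodic

theorem AntitoneOn.ae_eq_of_ae_eq_comp_add {g : ℝ → ℝ} {p : ℝ}
    (hg : AntitoneOn g (Ioo 0 (2 * p)))
    (hshift : ∀ᵐ y ∂volume.restrict (Ioo 0 p), g y = g (y + p)) :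
    ∀ᵐ x ∂volume.restrict (Ioo 0 (2 * p)), g x = g p := by
  rw [ae_restrict_iff' measurableSet_Ioo] at hshift ⊢
  have hshift' := (measurePreserving_sub_right volume p).quasiMeasurePreserving.ae hshift
  filter_upwards [hshift, hshift', measure_eq_zero_iff_ae_notMem.1 (measure_singleton p)]
    with x hx hx' hxp ⟨hx0, hx2p⟩
  have hp : p ∈ Ioo 0 (2 * p) := ⟨by linarith, by linarith⟩
  -- `g x ≥ g p ≥ g (x + p)` squeezes both sides of each equation `g x = g (x + p)` to `g p`.
  rcases lt_or_gt_of_ne (hxp : x ≠ p) with hlt | hgt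
  · have h1 := hg ⟨hx0, hx2p⟩ hp hlt.le
    have h2 := hg hp ⟨by linarith, by linarith⟩ (by linarith : p ≤ x + p)
    linarith [hx ⟨hx0, hlt⟩]
  · have h1 := hg ⟨by linarith, by linarith⟩ hp (by linarith : x - p ≤ p)
    have h2 := hg hp ⟨hx0, hx2p⟩ hgt.le
    have := hx' ⟨by linarith, by linarith⟩
    rw [sub_add_cancel] at this
    linarith

theorem AntitoneOn.sub_comp_add_pi_mul_sin_nonneg {g : ℝ → ℝ}
    (hg : AntitoneOn g (Ioo 0 (2 * π))) {y : ℝ} (hy : y ∈ Ioo 0 π) :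
    0 ≤ (g y - g (y + π)) * sin y := by
  obtain ⟨hy0, hyπ⟩ := hy
  exact mul_nonneg (sub_nonneg.2 <| hg ⟨hy0, by linarith⟩ ⟨by linarith, by linarith⟩ (by linarith))
    (sin_nonneg_of_nonneg_of_le_pi hy0.le hyπ.le)

theorem sine_coeff_nonneg_general (g : ℝ → ℝ)
    (hanti : AntitoneOn g (Ioo 0 (2 * π)))
    (hint : IntegrableOn (fun x => x * g x) (Ioo 0 (2 * π))) :
    0 ≤ ∫ x in Ioo 0 (2 * π), g x * Real.sin x ∧
      ((∫ x in Ioo 0 (2 * π), g x * Real.sin x) = 0 →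
        ∃ c : ℝ, ∀ᵐ x ∂(volume.restrict (Ioo 0 (2 * π))), g x = c) := by
  have hsin : IntegrableOn (fun x => g x * sin x) (Ioo 0 (2 * π)) :=
    hint.mul_sin_of_id_mul (aemeasurable_restrict_of_antitoneOn measurableSet_Ioo hanti)
  have hII : IntervalIntegrable (fun x => g x * sin x) volume 0 (0 + 2 * π) :=
    (intervalIntegrable_iff_integrableOn_Ioo_of_le (by positivity)).2 (by simpa using hsin)
  have hfold : ∫ x in Ioo 0 (2 * π), g x * sin x =
      ∫ x in Ioo 0 π, (g x - g (x + π)) * sin x := by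
    simpa [intervalIntegral.integral_of_le, pi_pos.le, integral_Ioc_eq_integral_Ioo] using
      sin_antiperiodic.intervalIntegral_mul_eq_integral_sub_comp_add_mul hII
  have hnonneg : ∀ y ∈ Ioo 0 π, 0 ≤ (g y - g (y + π)) * sin y := fun _ hy =>
    hanti.sub_comp_add_pi_mul_sin_nonneg hy
  refine ⟨hfold ▸ setIntegral_nonneg measurableSet_Ioo hnonneg, fun hzero => ⟨g π, ?_⟩⟩
  have hdiff : IntegrableOn (fun x => (g x - g (x + π)) * sin x) (Ioo 0 π) :=
    (intervalIntegrable_iff_integrableOn_Ioo_of_le pi_pos.le).1 <| by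
      simpa using sin_antiperiodic.intervalIntegrable_sub_comp_add_mul hII
  have hvanish := (setIntegral_eq_zero_iff_of_nonneg_ae
    (ae_restrict_of_forall_mem measurableSet_Ioo hnonneg) hdiff).1 (hfold ▸ hzero)
  refine hanti.ae_eq_of_ae_eq_comp_add ?_
  filter_upwards [hvanish, ae_restrict_mem measurableSet_Ioo] with y hy ⟨hy0, hyπ⟩
  have := (mul_eq_zero.1 hy).resolve_right (sin_pos_of_pos_of_lt_pi hy0 hyπ).ne'
  linarith

theorem sine_coeff_nonneg (g : ℝ → ℝ)
    (hmeas : AEMeasurable g (volume.restrict (Ioo 0 (2 * π))))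
    (hnn : ∀ x ∈ Ioo 0 (2 * π), 0 ≤ g x)
    (hanti : AntitoneOn g (Ioo 0 (2 * π)))
    (hint : IntegrableOn (fun x => x * g x) (Ioo 0 (2 * π))) :
    0 ≤ ∫ x in Ioo 0 (2 * π), g x * Real.sin x ∧
      ((∫ x in Ioo 0 (2 * π), g x * Real.sin x) = 0 →
        ∃ c : ℝ, ∀ᵐ x ∂(volume.restrict (Ioo 0 (2 * π))), g x = c) :=
  sine_coeff_nonneg_general g hanti hint
end

section
/- Let u be a 1-periodic square-integrable function on ℝ and ρ_δ a symmetric kernel supported in (−δ,δ) with ρ_δ(|s|)/|s| integrable. Then the Fourier coefficients of the nonlocal gradient G_δ u(x) = ∫₀^δ ρ_δ(s) (u(x+s)−u(x−s))/s ds satisfy (G_δ u)^(k) = i b_δ(k) û(k), where b_δ(k) = 2∫₀^δ (ρ_δ(s)/s) sin(2πks) ds. -/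
/-!
By periodicity, translating `u` by `s` multiplies its `k`-th Fourier coefficient by
`exp (2πiks)`, so the coefficient of `u (· + s) - u (· - s)` is `2i sin (2πks) û(k)`.
Integrating this against `ρ(s)/s` gives the symbol, once Fubini is justified: for every `s`,
`∫₀¹ |u (x ± s)| dx = ‖u‖_{L¹(0,1)}`, and `ρ(s)/s` is integrable on `(0, δ)`.
-/

open MeasureTheory Measure Set Real

namespace Function.Periodic

variable {E : Type*} [NormedAddCommGroup E] {f : ℝ → E} {T : ℝ}

theorem locallyIntegrable (hf : Periodic f T) (hT : T ≠ 0)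
    (h : IntervalIntegrable f volume 0 T) : LocallyIntegrable f volume := by
  refine locallyIntegrable_iff.2 fun k hk => ?_
  exact ((intervalIntegrable_iff' (f := f)).1 (hf.intervalIntegrable₀ hT h _ _)).mono_set
    (hk.isBounded.subset_Icc_sInf_sSup.trans Icc_subset_uIcc)

theorem integrableOn_Ioo_comp_add (hf : Periodic f T) (hT : 0 < T)
    (h : IntegrableOn f (Ioo 0 T)) (s : ℝ) : IntegrableOn (fun x => f (x + s)) (Ioo 0 T) := by
  rw [← intervalIntegrable_iff_integrableOn_Ioo_of_le hT.le] at h ⊢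
  simpa using (hf.intervalIntegrable₀ hT.ne' h s (T + s)).comp_add_right s

variable [NormedSpace ℝ E]

theorem setIntegral_Ioo_comp_add (hf : Periodic f T) (hT : 0 ≤ T) (s : ℝ) :
    ∫ x in Ioo 0 T, f (x + s) = ∫ x in Ioo 0 T, f x := by
  simp only [← integral_Ioc_eq_integral_Ioo, ← intervalIntegral.integral_of_le hT,
    intervalIntegral.integral_comp_add_right]
  simpa [add_comm] using hf.intervalIntegral_add_eq s 0

theorem integrable_prod_smul_comp_add (hf : Periodic f T) (hT : 0 < T)
    (hfi : IntegrableOn f (Ioo 0 T)) {ν : Measure ℝ} [SFinite ν] {q : ℝ → ℝ}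
    (hq : Integrable q ν) {φ : ℝ → ℝ} (hφ : Measurable φ) :
    Integrable (fun p : ℝ × ℝ => q p.2 • f (p.1 + φ p.2))
      ((volume.restrict (Ioo 0 T)).prod ν) := by
  set μ := volume.restrict (Ioo 0 T)
  have hloc : LocallyIntegrable f volume :=
    hf.locallyIntegrable hT.ne' ((intervalIntegrable_iff_integrableOn_Ioo_of_le hT.le).2 hfi)
  have hshift : QuasiMeasurePreserving (fun p : ℝ × ℝ => p.1 + φ p.2) (μ.prod ν) volume :=
    MeasureTheory.QuasiMeasurePreserving.prod_of_left
      (measurable_fst.add (hφ.comp measurable_snd)) (ae_of_all _ fun s =>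
        (measurePreserving_add_right volume (φ s)).quasiMeasurePreserving.mono_left
          restrict_le_self.absolutelyContinuous)
  have hmeas :
      AEStronglyMeasurable (fun p : ℝ × ℝ => q p.2 • f (p.1 + φ p.2)) (μ.prod ν) :=
    hq.aestronglyMeasurable.comp_snd.smul
      (hloc.aestronglyMeasurable.comp_quasiMeasurePreserving hshift)
  have hnorm (s : ℝ) :
      ∫ x, ‖q s • f (x + φ s)‖ ∂μ = ‖q s‖ * ∫ x in Ioo 0 T, ‖f x‖ := by
    simp only [norm_smul, integral_const_mul]
    exact congrArg _ ((hf.comp norm).setIntegral_Ioo_comp_add hT.le (φ s))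
  refine (integrable_prod_iff' hmeas).2
    ⟨ae_of_all _ fun s => (hf.integrableOn_Ioo_comp_add hT hfi (φ s)).smul (q s), ?_⟩
  simpa only [hnorm] using hq.norm.mul_const _

end Function.Periodic

noncomputable def fourierExp (k : ℤ) (x : ℝ) : ℂ := Complex.exp (-2 * π * Complex.I * k * x)

section fourierExp

open Complex

variable (k : ℤ)

theorem fourierExp_add (x y : ℝ) : fourierExp k (x + y) = fourierExp k x * fourierExp k y := by
  simp only [fourierExp, ← Complex.exp_add]
  push_cast
  ring_nf

theorem norm_fourierExp (x : ℝ) : ‖fourierExp k x‖ = 1 := by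
  rw [fourierExp, Complex.norm_exp]
  simp

theorem continuous_fourierExp : Continuous (fourierExp k) := by
  unfold fourierExp
  fun_prop

theorem periodic_fourierExp : Function.Periodic (fourierExp k) 1 := fun x => by
  have h1 : fourierExp k 1 = 1 := by
    rw [fourierExp, ← exp_int_mul_two_pi_mul_I (-k)]
    push_cast
    ring_nf
  rw [fourierExp_add, h1, mul_one]

theorem fourierExp_neg_sub_fourierExp (s : ℝ) :
    fourierExp k (-s) - fourierExp k s = 2 * I * (Real.sin (2 * π * k * s) : ℂ) := by
  have hneg : fourierExp k (-s) = exp ((2 * π * k * s : ℂ) * I) := by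
    rw [fourierExp]; push_cast; ring_nf
  have hpos : fourierExp k s = exp (-(2 * π * k * s : ℂ) * I) := by
    rw [fourierExp]; ring_nf
  rw [hneg, hpos, exp_mul_I, exp_mul_I, Complex.cos_neg, Complex.sin_neg]
  push_cast
  ring

end fourierExp

theorem MeasureTheory.Integrable.mul_fourierExp {α : Type*} [MeasurableSpace α] {μ : Measure α}
    {g : α → ℂ} (hg : Integrable g μ) (k : ℤ) {φ : α → ℝ} (hφ : Measurable φ) :
    Integrable (fun a => g a * fourierExp k (φ a)) μ :=
  hg.mul_bdd ((continuous_fourierExp k).measurable.comp hφ).aestronglyMeasurable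
    (ae_of_all _ fun a => (norm_fourierExp k (φ a)).le)

namespace Function.Periodic

variable {f : ℝ → ℂ}

theorem setIntegral_comp_add_mul_fourierExp (hf : Periodic f 1) (k : ℤ) (s : ℝ) :
    ∫ x in Ioo 0 1, f (x + s) * fourierExp k x =
      fourierExp k (-s) * ∫ x in Ioo 0 1, f x * fourierExp k x := by
  have hshift (x : ℝ) : fourierExp k x = fourierExp k (-s) * fourierExp k (x + s) := by
    rw [← fourierExp_add]; ring_nf
  calc ∫ x in Ioo 0 1, f (x + s) * fourierExp k x
      = ∫ x in Ioo 0 1, fourierExp k (-s) * (f (x + s) * fourierExp k (x + s)) := by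
        congr 1 with x
        rw [hshift x]
        ring
    _ = _ := by
      rw [integral_const_mul]
      exact congrArg _ ((hf.mul (periodic_fourierExp k)).setIntegral_Ioo_comp_add zero_le_one s)

theorem setIntegral_sub_comp_mul_fourierExp (hf : Periodic f 1) (hfi : IntegrableOn f (Ioo 0 1))
    (k : ℤ) (s : ℝ) :
    ∫ x in Ioo 0 1, (f (x + s) - f (x - s)) * fourierExp k x =
      2 * Complex.I * (Real.sin (2 * π * k * s) : ℂ) *
        ∫ x in Ioo 0 1, f x * fourierExp k x := by
  have hint (t : ℝ) : IntegrableOn (fun x => f (x + t) * fourierExp k x) (Ioo 0 1) :=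
    (hf.integrableOn_Ioo_comp_add one_pos hfi t).mul_fourierExp k measurable_id
  simp only [sub_eq_add_neg _ s, sub_mul]
  rw [integral_sub (hint s) (hint (-s)), hf.setIntegral_comp_add_mul_fourierExp,
    hf.setIntegral_comp_add_mul_fourierExp, neg_neg, ← sub_mul, fourierExp_neg_sub_fourierExp]

theorem setIntegral_integral_smul_sub_comp_mul_fourierExp (hf : Periodic f 1)
    (hfi : IntegrableOn f (Ioo 0 1)) {ν : Measure ℝ} [SFinite ν] {q : ℝ → ℝ}
    (hq : Integrable q ν) (k : ℤ) :
    ∫ x in Ioo 0 1, (∫ s, q s • (f (x + s) - f (x - s)) ∂ν) * fourierExp k x =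
      2 * Complex.I * ((∫ s, q s * Real.sin (2 * π * k * s) ∂ν : ℝ) : ℂ) *
        ∫ x in Ioo 0 1, f x * fourierExp k x := by
  set F : ℝ → ℝ → ℂ := fun x s => q s • (f (x + s) - f (x - s)) * fourierExp k x
  have hF : Integrable (Function.uncurry F) ((volume.restrict (Ioo 0 1)).prod ν) := by
    have h := (hf.integrable_prod_smul_comp_add one_pos hfi hq measurable_id).sub
      (hf.integrable_prod_smul_comp_add one_pos hfi hq measurable_neg)
    refine (h.mul_fourierExp k measurable_fst).congr (ae_of_all _ fun p => ?_)
    simp only [F, Function.uncurry, Pi.sub_apply, id, sub_eq_add_neg, smul_add, smul_neg]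
  have hslice (s : ℝ) : ∫ x in Ioo 0 1, F x s = (q s * Real.sin (2 * π * k * s)) •
      (2 * Complex.I * ∫ x in Ioo 0 1, f x * fourierExp k x) := by
    simp only [F, smul_mul_assoc]
    rw [integral_smul, hf.setIntegral_sub_comp_mul_fourierExp hfi, mul_smul]
    simp only [Complex.real_smul]
    ring
  calc _ = ∫ x in Ioo 0 1, ∫ s, F x s ∂ν := by simp only [F, integral_mul_const]
    _ = ∫ s, (∫ x in Ioo 0 1, F x s) ∂ν := integral_integral_swap hF
    _ = _ := by
      rw [funext hslice, integral_smul_const, Complex.real_smul]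
      ring

end Function.Periodic

theorem fourier_symbol_of_nonlocal_gradient_general (u ρ : ℝ → ℝ) (δ : ℝ)
    (hper : Function.Periodic u 1)
    (hL2 : MemLp u 2 (volume.restrict (Ioo (0 : ℝ) 1)))
    (hint : IntegrableOn (fun s => ρ |s| / |s|) (Ioo (-δ) δ))
    (k : ℤ) :
    (∫ x in Ioo (0 : ℝ) 1,
        ((∫ s in Ioo 0 δ, ρ s * (u (x + s) - u (x - s)) / s : ℝ) : ℂ) *
          Complex.exp (-2 * π * Complex.I * k * x))
      = Complex.I * ((2 * ∫ s in Ioo 0 δ, ρ s / s * Real.sin (2 * π * k * s) : ℝ) : ℂ) *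
          ∫ x in Ioo (0 : ℝ) 1, (u x : ℂ) * Complex.exp (-2 * π * Complex.I * k * x) := by
  have hkernel : IntegrableOn (fun s => ρ s / s) (Ioo 0 δ) :=
    (hint.mono_set fun s hs => ⟨by linarith [hs.1, hs.2], hs.2⟩).congr_fun
      (fun s hs => by simp only [abs_of_pos hs.1]) measurableSet_Ioo
  have hU : Function.Periodic (fun x => (u x : ℂ)) 1 := fun x => congrArg _ (hper x)
  have hinner (x : ℝ) : ((∫ s in Ioo 0 δ, ρ s * (u (x + s) - u (x - s)) / s : ℝ) : ℂ) =
      ∫ s in Ioo 0 δ, (ρ s / s) • ((u (x + s) : ℂ) - u (x - s)) := by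
    rw [← integral_complex_ofReal]
    congr 1 with s
    rw [Complex.real_smul]
    push_cast
    ring
  simp only [hinner]
  have key := hU.setIntegral_integral_smul_sub_comp_mul_fourierExp
    (hL2.integrable one_le_two).ofReal hkernel k
  simp only [fourierExp] at key
  rw [key]
  push_cast
  ring

theorem fourier_symbol_of_nonlocal_gradient (u ρ : ℝ → ℝ) (δ : ℝ) (hδ : 0 < δ)
    (hper : Function.Periodic u 1)
    (hL2 : MemLp u 2 (volume.restrict (Ioo (0 : ℝ) 1)))
    (hsym : ∀ s, ρ (-s) = ρ s)
    (hsupp : ∀ s, s ∉ Ioo (-δ) δ → ρ s = 0)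
    (hint : IntegrableOn (fun s => ρ |s| / |s|) (Ioo (-δ) δ))
    (k : ℤ) :
    (∫ x in Ioo (0 : ℝ) 1,
        ((∫ s in Ioo 0 δ, ρ s * (u (x + s) - u (x - s)) / s : ℝ) : ℂ) *
          Complex.exp (-2 * π * Complex.I * k * x))
      = Complex.I * ((2 * ∫ s in Ioo 0 δ, ρ s / s * Real.sin (2 * π * k * s) : ℝ) : ℂ) *
          ∫ x in Ioo (0 : ℝ) 1, (u x : ℂ) * Complex.exp (-2 * π * Complex.I * k * x) :=
  fourier_symbol_of_nonlocal_gradient_general u ρ δ hper hL2 hint k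
end

section
/- Let ρ:(0,1)→ℝ be non-negative with ρ(s)/s non-increasing on (0,1), and let a > π. Then ∫_{π/a}^{1} (ρ(s)/s) sin(as) ds ≤ 0. -/
/-!
Substituting `s = t + π / a` turns the integral into `-∫₀^{1 - π/a} g(t) sin(a t) dt` with
`g(t) = ρ(t + π/a) / (t + π/a)` non-negative and non-increasing. Such an integral is
non-negative: on each period `[2kπ/a, 2(k+1)π/a]` the negative half-wave, shifted back by `π/a`,
is dominated by the positive half-wave before it, because `g` decreases.
-/

open MeasureTheory Set Real

open intervalIntegral

section SinePositivity

variable {a c d T : ℝ} {g : ℝ → ℝ}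

lemma sin_mul_nonneg_of_le_pi_div (ha : 0 < a) {t : ℝ} (ht₀ : 0 ≤ t) (ht : t ≤ π / a) :
    0 ≤ sin (a * t) :=
  sin_nonneg_of_nonneg_of_le_pi (by positivity) (by rwa [le_div_iff₀' ha] at ht)

lemma sin_mul_add_pi_div (ha : a ≠ 0) (t : ℝ) : sin (a * (t + π / a)) = -sin (a * t) := by
  rw [mul_add, mul_div_cancel₀ π ha, sin_add_pi]

lemma sin_mul_add_two_pi_div (ha : a ≠ 0) (t : ℝ) : sin (a * (t + 2 * π / a)) = sin (a * t) := by
  rw [mul_add, mul_div_cancel₀ _ ha, sin_add_two_pi]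

lemma integral_comp_add_pi_div_mul_sin (ha : a ≠ 0) (g : ℝ → ℝ) (c d : ℝ) :
    ∫ t in c..d, g (t + π / a) * sin (a * t) =
      -∫ t in c + π / a..d + π / a, g t * sin (a * t) := by
  rw [← integral_comp_add_right, ← intervalIntegral.integral_neg]
  simp only [sin_mul_add_pi_div ha, mul_neg, neg_neg]

lemma integral_comp_add_two_pi_div_mul_sin (ha : a ≠ 0) (g : ℝ → ℝ) (c d : ℝ) :
    ∫ t in c..d, g (t + 2 * π / a) * sin (a * t) =
      ∫ t in c + 2 * π / a..d + 2 * π / a, g t * sin (a * t) := by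
  rw [← integral_comp_add_right]
  simp only [sin_mul_add_two_pi_div ha]

lemma IntervalIntegrable.comp_add_pi_div_mul_sin (ha : a ≠ 0)
    (hg : IntervalIntegrable (fun t => g t * sin (a * t)) volume (c + π / a) (d + π / a)) :
    IntervalIntegrable (fun t => g (t + π / a) * sin (a * t)) volume c d := by
  simpa [sin_mul_add_pi_div ha, Pi.neg_def] using (hg.comp_add_right (π / a)).neg

lemma IntervalIntegrable.comp_add_two_pi_div_mul_sin (ha : a ≠ 0)
    (hg : IntervalIntegrable (fun t => g t * sin (a * t)) volume (c + 2 * π / a)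
      (d + 2 * π / a)) :
    IntervalIntegrable (fun t => g (t + 2 * π / a) * sin (a * t)) volume c d := by
  simpa [sin_mul_add_two_pi_div ha] using hg.comp_add_right (2 * π / a)

lemma mapsTo_add_const_Ioo_zero (hc : 0 ≤ c) : MapsTo (· + c) (Ioo 0 (T - c)) (Ioo 0 T) :=
  fun _ ht => ⟨by linarith [ht.1], by linarith [ht.2]⟩

lemma AntitoneOn.comp_add_const_Ioo_zero (hg : AntitoneOn g (Ioo 0 T)) (hc : 0 ≤ c) :
    AntitoneOn (fun t => g (t + c)) (Ioo 0 (T - c)) := fun _ hx _ hy hxy =>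
  hg (mapsTo_add_const_Ioo_zero hc hx) (mapsTo_add_const_Ioo_zero hc hy) (by linarith)

lemma IntervalIntegrable.of_mem_Icc (hint : IntervalIntegrable g volume 0 T) (hT : 0 ≤ T)
    (hc : c ∈ Icc 0 T) (hd : d ∈ Icc 0 T) : IntervalIntegrable g volume c d :=
  hint.mono_set (by rw [uIcc_of_le hT]; exact uIcc_subset_Icc hc hd)

lemma integral_mul_sin_nonneg_of_le_pi_div (ha : 0 < a) (hc : 0 ≤ c) (hcd : c ≤ d)
    (hd : d ≤ π / a) (hg₀ : ∀ t ∈ Ioo c d, 0 ≤ g t) :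
    0 ≤ ∫ t in c..d, g t * sin (a * t) := by
  rw [integral_of_le hcd, integral_Ioc_eq_integral_Ioo]
  exact setIntegral_nonneg measurableSet_Ioo fun t ht =>
    mul_nonneg (hg₀ t ht) (sin_mul_nonneg_of_le_pi_div ha (hc.trans ht.1.le) (ht.2.le.trans hd))

lemma integral_mul_sin_nonneg_of_le_two_pi_div (ha : 0 < a) (hT : 0 ≤ T) (hT₂ : T ≤ 2 * π / a)
    (hg₀ : ∀ t ∈ Ioo 0 T, 0 ≤ g t) (hg : AntitoneOn g (Ioo 0 T))
    (hint : IntervalIntegrable (fun t => g t * sin (a * t)) volume 0 T) :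
    0 ≤ ∫ t in 0..T, g t * sin (a * t) := by
  set h := π / a
  rcases le_total T h with hTh | hhT
  · exact integral_mul_sin_nonneg_of_le_pi_div ha le_rfl hT hTh hg₀
  have hTh : T - h ≤ h := by rw [mul_div_assoc] at hT₂; linarith
  have hh : 0 < h := by positivity
  have mem : ∀ {x}, 0 ≤ x → x ≤ T → x ∈ Icc 0 T := fun h₀ h₁ => ⟨h₀, h₁⟩
  have hmid : 0 ≤ ∫ t in T - h..h, g t * sin (a * t) :=
    integral_mul_sin_nonneg_of_le_pi_div ha (by linarith) hTh le_rfl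
      fun t ht => hg₀ t ⟨by linarith [ht.1], by linarith [ht.2]⟩
  have htail : ∫ t in h..T, g t * sin (a * t) = -∫ t in 0..T - h, g (t + h) * sin (a * t) := by
    rw [integral_comp_add_pi_div_mul_sin ha.ne', zero_add, sub_add_cancel, neg_neg]
  have hcomp :
      ∫ t in 0..T - h, g (t + h) * sin (a * t) ≤ ∫ t in 0..T - h, g t * sin (a * t) := by
    refine integral_mono_on_of_le_Ioo (by linarith)
      (IntervalIntegrable.comp_add_pi_div_mul_sin ha.ne' ?_) ?_ fun t ht => ?_
    · rw [zero_add, sub_add_cancel]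
      exact hint.of_mem_Icc hT (mem hh.le hhT) (mem hT le_rfl)
    · exact hint.of_mem_Icc hT (mem le_rfl hT) (mem (by linarith) (by linarith))
    · refine mul_le_mul_of_nonneg_right ?_
        (sin_mul_nonneg_of_le_pi_div ha ht.1.le (by linarith [ht.2]))
      exact hg ⟨ht.1, by linarith [ht.2]⟩ (mapsTo_add_const_Ioo_zero hh.le ht) (by linarith)
  have hsplit : ∫ t in 0..T, g t * sin (a * t) = (∫ t in 0..T - h, g t * sin (a * t)) +
      (∫ t in T - h..h, g t * sin (a * t)) + ∫ t in h..T, g t * sin (a * t) := by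
    have h₀ := mem le_rfl hT
    have h₁ := mem (x := T - h) (by linarith) (by linarith)
    have h₂ := mem hh.le hhT
    have h₃ := mem hT le_rfl
    rw [integral_add_adjacent_intervals (hint.of_mem_Icc hT h₀ h₁) (hint.of_mem_Icc hT h₁ h₂),
      integral_add_adjacent_intervals (hint.of_mem_Icc hT h₀ h₂) (hint.of_mem_Icc hT h₂ h₃)]
  rw [hsplit, htail]
  linarith

lemma integral_mul_sin_nonneg_of_antitoneOn (ha : 0 < a) (hT : 0 ≤ T)
    (hg₀ : ∀ t ∈ Ioo 0 T, 0 ≤ g t) (hg : AntitoneOn g (Ioo 0 T))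
    (hint : IntervalIntegrable (fun t => g t * sin (a * t)) volume 0 T) :
    0 ≤ ∫ t in 0..T, g t * sin (a * t) := by
  have hp : 0 < 2 * π / a := by positivity
  obtain ⟨n, hn⟩ := exists_nat_ge (T / (2 * π / a))
  rw [div_le_iff₀ hp] at hn
  induction n generalizing T g with
  | zero =>
    obtain rfl : T = 0 := le_antisymm (by simpa using hn) hT
    simp
  | succ n ih =>
    rcases le_total T (2 * π / a) with hTp | hpT
    · exact integral_mul_sin_nonneg_of_le_two_pi_div ha hT hTp hg₀ hg hint
    have hp_mem : 2 * π / a ∈ Icc 0 T := ⟨hp.le, hpT⟩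
    have hhead : 0 ≤ ∫ t in 0..2 * π / a, g t * sin (a * t) :=
      integral_mul_sin_nonneg_of_le_two_pi_div ha hp.le le_rfl
        (fun t ht => hg₀ t ⟨ht.1, ht.2.trans_le hpT⟩) (hg.mono (Ioo_subset_Ioo_right hpT))
        (hint.of_mem_Icc hT ⟨le_rfl, hT⟩ hp_mem)
    have htail : 0 ≤ ∫ t in 2 * π / a..T, g t * sin (a * t) := by
      have hint' := hint.of_mem_Icc hT hp_mem ⟨hT, le_rfl⟩
      rw [← zero_add (2 * π / a), ← sub_add_cancel T (2 * π / a)] at hint' ⊢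
      rw [← integral_comp_add_two_pi_div_mul_sin ha.ne']
      refine ih (sub_nonneg.2 hpT) (fun t ht => hg₀ _ (mapsTo_add_const_Ioo_zero hp.le ht))
        (hg.comp_add_const_Ioo_zero hp.le) (hint'.comp_add_two_pi_div_mul_sin ha.ne') ?_
      push_cast at hn
      linarith
    rw [← integral_add_adjacent_intervals (hint.of_mem_Icc hT ⟨le_rfl, hT⟩ hp_mem)
      (hint.of_mem_Icc hT hp_mem ⟨hT, le_rfl⟩)]
    exact add_nonneg hhead htail

end SinePositivity

theorem tail_nonpos (ρ : ℝ → ℝ) (a : ℝ) (ha : π < a)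
    (hnn : ∀ s ∈ Ioo (0 : ℝ) 1, 0 ≤ ρ s)
    (hanti : AntitoneOn (fun s => ρ s / s) (Ioo (0 : ℝ) 1))
    (hint : IntegrableOn (fun s => ρ s / s * Real.sin (a * s)) (Ioo (π / a) 1)) :
    (∫ s in Ioo (π / a) 1, ρ s / s * Real.sin (a * s)) ≤ 0 := by
  have ha₀ : 0 < a := pi_pos.trans ha
  have hh : 0 < π / a := by positivity
  have hh₁ : π / a < 1 := (div_lt_one ha₀).2 ha
  have hint' : IntervalIntegrable (fun s => ρ s / s * sin (a * s)) volume
      (0 + π / a) (1 - π / a + π / a) := by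
    rwa [zero_add, sub_add_cancel, intervalIntegrable_iff_integrableOn_Ioo_of_le hh₁.le]
  have hshift : 0 ≤ ∫ t in 0..1 - π / a, ρ (t + π / a) / (t + π / a) * sin (a * t) :=
    integral_mul_sin_nonneg_of_antitoneOn ha₀ (by linarith)
      (fun t ht => div_nonneg (hnn _ (mapsTo_add_const_Ioo_zero hh.le ht)) (by linarith [ht.1]))
      (hanti.comp_add_const_Ioo_zero hh.le) (hint'.comp_add_pi_div_mul_sin ha₀.ne')
  rw [integral_comp_add_pi_div_mul_sin ha₀.ne' (fun s => ρ s / s), zero_add, sub_add_cancel,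
    integral_of_le hh₁.le, integral_Ioc_eq_integral_Ioo] at hshift
  linarith
end

section
/- Suppose ρ(s) = c s^{−α} on (0,ε) with c > 0 and α ∈ (0,1), ρ(s)/s non-increasing on (0,1), ρ ≥ 0. Then for a > 2π/ε, 2∫₀¹ (ρ(s)/s) sin(as) ds ≥ c a^{α} ∫₀^{2π} s^{−(1+α)} sin(s) ds, and the constant ∫₀^{2π} s^{−(1+α)} sin(s) ds is strictly positive. -/
/-!
Near `0` the kernel is the pure power `c s^(-α)`, so on `(0, 2π/a)` the substitution `s ↦ s / a`
produces exactly `c a^α ∫₀^{2π} s^(-(1+α)) sin s`. On the rest of `(0, 1)` the weight `ρ(s)/s` is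
non-negative and non-increasing, and the integral against `sin (a s)` is non-negative: over a full
period, pairing `t` with `t + π` gives `∫₀^π (g t - g (t + π)) sin t ≥ 0`, and cutting the weight
off by zero beyond the end of the interval keeps it non-increasing, so an incomplete last period
costs nothing. The same pairing with the strictly decreasing weight `s^(-(1+α))` makes the
constant strictly positive.
-/

open MeasureTheory Set Real

section SinPeriod

variable {g : ℝ → ℝ}

theorem IntervalIntegrable.mul_sin_and_comp_add_pi_mul_sin
    (hg : IntervalIntegrable (fun t => g t * sin t) volume 0 (2 * π)) :
    IntervalIntegrable (fun t => g t * sin t) volume 0 π ∧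
      IntervalIntegrable (fun t => g (t + π) * sin t) volume 0 π := by
  have hπ := pi_pos
  constructor
  · exact hg.mono_set (by rw [uIcc_of_le hπ.le, uIcc_of_le (by linarith)]; gcongr; linarith)
  · have hsecond : IntervalIntegrable (fun t => g t * sin t) volume π (2 * π) :=
      hg.mono_set (by rw [uIcc_of_le (by linarith), uIcc_of_le (by linarith)]; gcongr)
    have hshift := hsecond.comp_add_right π
    rw [sub_self, show 2 * π - π = π by ring] at hshift
    convert hshift.neg using 1
    ext t
    simp only [sin_add_pi, mul_neg, neg_neg, Pi.neg_apply]

theorem integral_mul_sin_eq_integral_sub_comp_add_pi_mul_sin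
    (hg : IntervalIntegrable (fun t => g t * sin t) volume 0 (2 * π)) :
    ∫ t in 0..2 * π, g t * sin t = ∫ t in 0..π, (g t - g (t + π)) * sin t := by
  obtain ⟨hfirst, hshifted⟩ := hg.mul_sin_and_comp_add_pi_mul_sin
  have hsecond : ∫ t in π..2 * π, g t * sin t = -∫ t in 0..π, g (t + π) * sin t := by
    calc ∫ t in π..2 * π, g t * sin t = ∫ t in 0..π, g (t + π) * sin (t + π) := by
          rw [intervalIntegral.integral_comp_add_right (fun t => g t * sin t), zero_add, two_mul]
      _ = -∫ t in 0..π, g (t + π) * sin t := by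
          simp only [sin_add_pi, mul_neg, intervalIntegral.integral_neg]
  simp only [sub_mul]
  rw [intervalIntegral.integral_sub hfirst hshifted]
  linarith [intervalIntegral.integral_interval_sub_left hg hfirst]

theorem AntitoneOn.intervalIntegrable_mul_sin {a b : ℝ} (hg : AntitoneOn g (uIcc a b)) :
    IntervalIntegrable (fun t => g t * sin t) volume a b :=
  hg.intervalIntegrable.mul_continuousOn continuous_sin.continuousOn

theorem integral_mul_sin_nonneg_of_antitoneOn_s10 (hg : AntitoneOn g (Icc 0 (2 * π))) :
    0 ≤ ∫ t in 0..2 * π, g t * sin t := by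
  rw [integral_mul_sin_eq_integral_sub_comp_add_pi_mul_sin
    (AntitoneOn.intervalIntegrable_mul_sin (by rwa [uIcc_of_le two_pi_pos.le]))]
  have hπ := pi_pos
  refine intervalIntegral.integral_nonneg hπ.le fun t ht => mul_nonneg ?_ (sin_nonneg_of_mem_Icc ht)
  exact sub_nonneg.2 (hg ⟨ht.1, by linarith [ht.2]⟩ ⟨by linarith [ht.1], by linarith [ht.2]⟩
    (by linarith))

theorem integral_mul_sin_pos_of_strictAntiOn
    (hi : IntervalIntegrable (fun t => g t * sin t) volume 0 (2 * π))
    (hg : StrictAntiOn g (Ioc 0 (2 * π))) :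
    0 < ∫ t in 0..2 * π, g t * sin t := by
  obtain ⟨hfirst, hshifted⟩ := hi.mul_sin_and_comp_add_pi_mul_sin
  rw [integral_mul_sin_eq_integral_sub_comp_add_pi_mul_sin hi]
  have hπ := pi_pos
  refine intervalIntegral.intervalIntegral_pos_of_pos_on
    (by simpa only [sub_mul] using hfirst.sub hshifted)
    (fun t ht => mul_pos ?_ (sin_pos_of_mem_Ioo ht)) hπ
  exact sub_pos.2 (hg ⟨ht.1, by linarith [ht.2]⟩ ⟨by linarith [ht.1], by linarith [ht.2]⟩
    (by linarith))

theorem integral_mul_sin_nonneg_of_antitoneOn_nat_mul_two_pi (n : ℕ)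
    (hg : AntitoneOn g (Icc 0 (n * (2 * π)))) :
    0 ≤ ∫ t in 0..n * (2 * π), g t * sin t := by
  induction n with
  | zero => simp
  | succ n ih =>
    have hπ := two_pi_pos
    have hn : (0 : ℝ) ≤ n * (2 * π) := by positivity
    have hsucc : ((n + 1 : ℕ) : ℝ) * (2 * π) = n * (2 * π) + 2 * π := by push_cast; ring
    rw [hsucc] at hg ⊢
    have hlast : 0 ≤ ∫ t in n * (2 * π)..n * (2 * π) + 2 * π, g t * sin t := by
      have hshift := intervalIntegral.integral_comp_add_right (fun t => g t * sin t)
        (a := 0) (b := 2 * π) (n * (2 * π))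
      simp only [sin_add_nat_mul_two_pi, zero_add] at hshift
      rw [add_comm (2 * π)] at hshift
      rw [← hshift]
      refine integral_mul_sin_nonneg_of_antitoneOn_s10 fun x hx y hy hxy => hg ?_ ?_ (by linarith)
      · exact ⟨by linarith [hx.1], by linarith [hx.2]⟩
      · exact ⟨by linarith [hy.1], by linarith [hy.2]⟩
    rw [← intervalIntegral.integral_add_adjacent_intervals
      (AntitoneOn.intervalIntegrable_mul_sin (hg.mono ?_))
      (AntitoneOn.intervalIntegrable_mul_sin (hg.mono ?_))]
    · exact add_nonneg (ih (hg.mono (Icc_subset_Icc le_rfl (by linarith)))) hlast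
    · rw [uIcc_of_le hn]; exact Icc_subset_Icc le_rfl (by linarith)
    · rw [uIcc_of_le (by linarith)]; exact Icc_subset_Icc hn le_rfl

theorem integral_mul_sin_nonneg_of_antitoneOn_Ico {u : ℝ} (hu : 0 ≤ u)
    (hg : AntitoneOn g (Ico 0 u)) (hg0 : ∀ t ∈ Ico 0 u, 0 ≤ g t) :
    0 ≤ ∫ t in 0..u, g t * sin t := by
  obtain ⟨n, hn⟩ : ∃ n : ℕ, u ≤ n * (2 * π) :=
    ⟨⌈u / (2 * π)⌉₊, (div_le_iff₀ two_pi_pos).1 (Nat.le_ceil _)⟩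
  set G := (Ico 0 u).indicator g
  have hG0 : ∀ t, 0 ≤ G t := indicator_nonneg hg0
  have hGanti : AntitoneOn G (Icc 0 (n * (2 * π))) := by
    intro x hx y hy hxy
    by_cases hyu : y < u
    · have hx' : x ∈ Ico 0 u := ⟨hx.1, hxy.trans_lt hyu⟩
      have hy' : y ∈ Ico 0 u := ⟨hy.1, hyu⟩
      simpa only [G, indicator_of_mem hx', indicator_of_mem hy'] using hg hx' hy' hxy
    · simpa only [G, indicator_of_notMem (fun h : y ∈ Ico 0 u => hyu h.2)] using hG0 x
  have hGg : ∫ t in 0..u, G t * sin t = ∫ t in 0..u, g t * sin t := by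
    refine intervalIntegral.integral_congr_ae ?_
    filter_upwards [Measure.ae_ne volume u] with t htu ht
    rw [uIoc_of_le hu] at ht
    simp only [G, indicator_of_mem (show t ∈ Ico 0 u from ⟨ht.1.le, lt_of_le_of_ne ht.2 htu⟩)]
  have hGzero : ∫ t in u..n * (2 * π), G t * sin t = 0 := by
    rw [intervalIntegral.integral_congr (g := fun _ => 0), intervalIntegral.integral_zero]
    intro t ht
    rw [uIcc_of_le hn] at ht
    simp only [G, indicator_of_notMem (fun h : t ∈ Ico 0 u => h.2.not_ge ht.1), zero_mul]
  calc 0 ≤ ∫ t in 0..n * (2 * π), G t * sin t :=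
        integral_mul_sin_nonneg_of_antitoneOn_nat_mul_two_pi n hGanti
    _ = (∫ t in 0..u, G t * sin t) + ∫ t in u..n * (2 * π), G t * sin t := by
        refine (intervalIntegral.integral_add_adjacent_intervals
          (AntitoneOn.intervalIntegrable_mul_sin (hGanti.mono ?_))
          (AntitoneOn.intervalIntegrable_mul_sin (hGanti.mono ?_))).symm
        · rw [uIcc_of_le hu]; exact Icc_subset_Icc le_rfl hn
        · rw [uIcc_of_le hn]; exact Icc_subset_Icc hu le_rfl
    _ = ∫ t in 0..u, g t * sin t := by rw [hGzero, add_zero, hGg]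

end SinPeriod

theorem integral_mul_sin_mul_nonneg_of_antitoneOn_Ico {f : ℝ → ℝ} {a u : ℝ} (ha : 0 < a)
    (hu : 2 * π / a ≤ u) (hf : AntitoneOn f (Ico (2 * π / a) u))
    (hf0 : ∀ s ∈ Ico (2 * π / a) u, 0 ≤ f s) :
    0 ≤ ∫ s in 2 * π / a..u, f s * sin (a * s) := by
  have hsubst := intervalIntegral.integral_comp_mul_add (fun s => f s * sin (a * s))
    (inv_ne_zero ha.ne') (2 * π / a) (a := 0) (b := a * u - 2 * π)
  have hlower : a⁻¹ * 0 + 2 * π / a = 2 * π / a := by ring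
  have hupper : a⁻¹ * (a * u - 2 * π) + 2 * π / a = u := by field_simp; ring
  have harg : ∀ x, a * (a⁻¹ * x + 2 * π / a) = x + 2 * π := fun x => by field_simp
  simp only [hlower, hupper, harg, sin_add_two_pi, inv_inv, smul_eq_mul] at hsubst
  have hmaps : ∀ x ∈ Ico 0 (a * u - 2 * π), a⁻¹ * x + 2 * π / a ∈ Ico (2 * π / a) u := by
    intro x hx
    have hx' : a⁻¹ * x + 2 * π / a = (x + 2 * π) / a := by ring
    refine ⟨by rw [hx']; gcongr; linarith [hx.1], ?_⟩
    rw [hx', div_lt_iff₀ ha]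
    linarith [hx.2]
  have hnonneg := integral_mul_sin_nonneg_of_antitoneOn_Ico (g := fun x => f (a⁻¹ * x + 2 * π / a))
    (by rwa [sub_nonneg, ← div_le_iff₀' ha])
    (fun x hx y hy hxy => hf (hmaps x hx) (hmaps y hy) (by gcongr))
    (fun x hx => hf0 _ (hmaps x hx))
  rw [hsubst] at hnonneg
  exact nonneg_of_mul_nonneg_right hnonneg ha

theorem intervalIntegrable_rpow_mul_sin {p b : ℝ} (hp : -2 < p) (hb : 0 ≤ b) :
    IntervalIntegrable (fun t => t ^ p * sin t) volume 0 b := by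
  refine (intervalIntegral.intervalIntegrable_rpow' (r := p + 1) (by linarith)).mono_fun
    (by fun_prop) ?_
  rw [Filter.EventuallyLE, ae_restrict_iff' measurableSet_uIoc]
  filter_upwards with t ht
  rw [uIoc_of_le hb] at ht
  have htp := rpow_pos_of_pos ht.1 p
  calc ‖t ^ p * sin t‖ = t ^ p * |sin t| := by
        rw [norm_mul, norm_of_nonneg htp.le, norm_eq_abs]
    _ ≤ t ^ p * t := by
        gcongr
        exact abs_sin_le_abs.trans (abs_of_pos ht.1).le
    _ = ‖t ^ (p + 1)‖ := by
        rw [rpow_add_one ht.1.ne', norm_of_nonneg (mul_pos htp ht.1).le]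

theorem integral_rpow_mul_sin_pos {p : ℝ} (hp : -2 < p) (hp0 : p < 0) :
    0 < ∫ t in 0..2 * π, t ^ p * sin t :=
  integral_mul_sin_pos_of_strictAntiOn (intervalIntegrable_rpow_mul_sin hp two_pi_pos.le)
    ((strictAntiOn_rpow_Ioi_of_exponent_neg hp0).mono Ioc_subset_Ioi_self)

theorem integral_rpow_mul_comp_mul {a b : ℝ} (ha : 0 < a) (hb : 0 ≤ b) (p : ℝ) (f : ℝ → ℝ) :
    ∫ s in 0..b, s ^ p * f (a * s) = a ^ (-(p + 1)) * ∫ t in 0..a * b, t ^ p * f t := by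
  have hpow : ∀ s ∈ uIcc 0 b, s ^ p * f (a * s) = a ^ (-p) * ((a * s) ^ p * f (a * s)) := by
    intro s hs
    rw [uIcc_of_le hb] at hs
    rw [mul_rpow ha.le hs.1, rpow_neg ha.le, ← mul_assoc, ← mul_assoc,
      inv_mul_cancel₀ (rpow_pos_of_pos ha p).ne', one_mul]
  rw [intervalIntegral.integral_congr hpow, intervalIntegral.integral_const_mul,
    intervalIntegral.integral_comp_mul_left (fun t => t ^ p * f t) ha.ne', mul_zero, smul_eq_mul,
    ← mul_assoc, neg_add, rpow_add ha, rpow_neg_one]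

theorem integral_div_mul_comp_mul_of_eq_rpow {ρ f : ℝ → ℝ} {c α a b : ℝ} (ha : 0 < a)
    (hb : 0 ≤ b) (hρ : ∀ s ∈ Ioc 0 (b / a), ρ s = c * s ^ (-α)) :
    ∫ s in 0..b / a, ρ s / s * f (a * s) = c * a ^ α * ∫ t in 0..b, t ^ (-(1 + α)) * f t := by
  have hpower : ∀ s ∈ uIoc 0 (b / a), ρ s / s * f (a * s) = c * (s ^ (-(1 + α)) * f (a * s)) := by
    intro s hs
    rw [uIoc_of_le (by positivity)] at hs
    rw [hρ s hs, show -(1 + α) = -α - 1 by ring, rpow_sub_one hs.1.ne']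
    ring
  rw [intervalIntegral.integral_congr_ae (.of_forall hpower), intervalIntegral.integral_const_mul,
    integral_rpow_mul_comp_mul ha (by positivity), mul_div_cancel₀ _ ha.ne',
    show -(-(1 + α) + 1) = α by ring, mul_assoc]

theorem high_frequency_lower_bound (ρ : ℝ → ℝ) (c α ε a : ℝ)
    (hc : 0 < c) (hα : α ∈ Ioo (0 : ℝ) 1) (hε : 0 < ε) (hε1 : ε ≤ 1)
    (hfrac : ∀ s ∈ Ioo 0 ε, ρ s = c * s ^ (-α))
    (hnn : ∀ s ∈ Ioo (0 : ℝ) 1, 0 ≤ ρ s)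
    (hanti : AntitoneOn (fun s => ρ s / s) (Ioo (0 : ℝ) 1))
    (ha : 2 * π / ε < a)
    (hint : IntegrableOn (fun s => ρ s / s * Real.sin (a * s)) (Ioo (0 : ℝ) 1)) :
    c * a ^ α * (∫ s in Ioo 0 (2 * π), s ^ (-(1 + α)) * Real.sin s)
        ≤ 2 * ∫ s in Ioo (0 : ℝ) 1, ρ s / s * Real.sin (a * s) ∧
      0 < ∫ s in Ioo 0 (2 * π), s ^ (-(1 + α)) * Real.sin s := by
  have ha₀ : 0 < a := (by positivity : 0 < 2 * π / ε).trans ha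
  have hcut₀ : 0 < 2 * π / a := by positivity
  have hcut : 2 * π / a < ε := (div_lt_comm₀ hε ha₀).1 ha
  rw [← integral_Ioc_eq_integral_Ioo, ← integral_Ioc_eq_integral_Ioo,
    ← intervalIntegral.integral_of_le two_pi_pos.le, ← intervalIntegral.integral_of_le zero_le_one]
  have hI := integral_rpow_mul_sin_pos (p := -(1 + α)) (by linarith [hα.2]) (by linarith [hα.1])
  have hJ : IntervalIntegrable (fun s => ρ s / s * sin (a * s)) volume 0 1 := by
    rwa [intervalIntegrable_iff_integrableOn_Ioo_of_le zero_le_one]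
  have hhead : ∫ s in 0..2 * π / a, ρ s / s * sin (a * s)
      = c * a ^ α * ∫ t in 0..2 * π, t ^ (-(1 + α)) * sin t :=
    integral_div_mul_comp_mul_of_eq_rpow ha₀ two_pi_pos.le
      fun s hs => hfrac s ⟨hs.1, hs.2.trans_lt hcut⟩
  have htail : 0 ≤ ∫ s in 2 * π / a..1, ρ s / s * sin (a * s) :=
    integral_mul_sin_mul_nonneg_of_antitoneOn_Ico ha₀ (hcut.le.trans hε1)
      (hanti.mono (Ico_subset_Ioo_left hcut₀))
      (fun s hs => div_nonneg (hnn s (Ico_subset_Ioo_left hcut₀ hs)) (hcut₀.trans_le hs.1).le)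
  have hcut₁ : 2 * π / a ∈ uIcc (0 : ℝ) 1 := mem_uIcc_of_le hcut₀.le (hcut.le.trans hε1)
  rw [← intervalIntegral.integral_add_adjacent_intervals
    (hJ.mono_set (uIcc_subset_uIcc left_mem_uIcc hcut₁))
    (hJ.mono_set (uIcc_subset_uIcc hcut₁ right_mem_uIcc)), hhead]
  have hhead_nonneg : 0 ≤ c * a ^ α * ∫ t in 0..2 * π, t ^ (-(1 + α)) * sin t :=
    mul_nonneg (by positivity) hI.le
  exact ⟨by linarith, hI⟩
end

section
/- Under Assumption (fractional kernel): ρ_δ(s)=δ^{−1}ρ(s/δ), ρ even, non-negative, supported in (−1,1), ∫_{−1}^1 ρ = 1, ρ(s)/s non-increasing on (0,1), and ρ(s)=c s^{−α} on (0,ε) for some c>0, α∈(0,1), ε>0. Then there exists C>0 independent of δ (as δ→0) and of k such that the symbol b_δ(k) = 2∫₀^δ (ρ_δ(s)/s) sin(2πks) ds ≥ C for every positive integer k. -/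
open MeasureTheory Set Real

/-!
The function `f(s) = ρ_δ(s)/s` is nonnegative and decreasing on `(0, ∞)`, so on every period
`[m/k, (m+1)/k]` of `sin(2πks)` the positive half outweighs the negative one: the symbol is at
least the contribution `∫ (f(s) - f(s + 1/(2k))) sin(2πks)` of the first half period, hence at least
that of a band `[b, 2b]`, where Jordan's inequality gives `sin(2πks) ≥ 4kb`. Taking
`b = δ · min(η/4, 1/(8kδ))` with `η = min ε 1` puts `[2b, 3b]` inside the range where `ρ` is the
fractional kernel `c s^{-α}`; the homogeneity of `s^{-1-α}` then bounds the band's contribution by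
`c κ η / 2`, `κ = 2^{-α}/2 - 3^{-α}/3`, uniformly in `δ ≤ 1` and `k ≥ 1`, so small `kδ` needs no
separate treatment.
-/

section Oscillation

variable {f : ℝ → ℝ} {k : ℝ}

lemma sin_two_pi_mul_add_half_period (hk : k ≠ 0) (s : ℝ) :
    sin (2 * π * k * (s + 1 / (2 * k))) = -sin (2 * π * k * s) := by
  rw [show 2 * π * k * (s + 1 / (2 * k)) = 2 * π * k * s + π by field_simp, sin_add_pi]

lemma sin_two_pi_mul_nonneg (hk : 0 < k) (m : ℕ) {s : ℝ}
    (hs : s ∈ Icc (m / k) (m / k + 1 / (2 * k))) : 0 ≤ sin (2 * π * k * s) := by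
  have h₁ : m / k * k ≤ s * k := by gcongr; exact hs.1
  have h₂ : s * k ≤ (m / k + 1 / (2 * k)) * k := by gcongr; exact hs.2
  field_simp at h₁ h₂
  rw [← sin_sub_nat_mul_two_pi _ m, show 2 * π * k * s - m * (2 * π) = 2 * π * (s * k - m) by ring]
  apply sin_nonneg_of_nonneg_of_le_pi <;> nlinarith [pi_pos]

lemma intervalIntegrable_of_integrableOn_Ioi {F : ℝ → ℝ} {a x y : ℝ}
    (hF : IntegrableOn F (Ioi a)) (hx : a ≤ x) (hxy : x ≤ y) : IntervalIntegrable F volume x y :=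
  (intervalIntegrable_iff_integrableOn_Ioc_of_le hxy).2 <|
    hF.mono_set fun _ hs => lt_of_le_of_lt hx hs.1

lemma intervalIntegrable_half_period_integrand (hk : 0 < k) {a : ℝ}
    (hint : IntegrableOn (fun s => f s * sin (2 * π * k * s)) (Ioi a)) :
    IntervalIntegrable (fun s => (f s - f (s + 1 / (2 * k))) * sin (2 * π * k * s)) volume
      a (a + 1 / (2 * k)) := by
  have hh : 0 ≤ 1 / (2 * k) := by positivity
  have hint₁ := intervalIntegrable_of_integrableOn_Ioi hint le_rfl (le_add_of_nonneg_right hh)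
  have hshift := (intervalIntegrable_of_integrableOn_Ioi hint (le_add_of_nonneg_right hh)
    (le_add_of_nonneg_right hh)).comp_add_right (1 / (2 * k))
  simp only [add_sub_cancel_right] at hshift
  convert hint₁.add hshift using 1
  ext s
  rw [sin_two_pi_mul_add_half_period hk.ne']
  ring

lemma integral_period_mul_sin_eq (hk : 0 < k) {a : ℝ}
    (hint : IntegrableOn (fun s => f s * sin (2 * π * k * s)) (Ioi a)) :
    ∫ s in a..a + 1 / k, f s * sin (2 * π * k * s) =
      ∫ s in a..a + 1 / (2 * k), (f s - f (s + 1 / (2 * k))) * sin (2 * π * k * s) := by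
  have hh : 0 ≤ 1 / (2 * k) := by positivity
  have hint₁ := intervalIntegrable_of_integrableOn_Ioi hint le_rfl (le_add_of_nonneg_right hh)
  have hint₂ := intervalIntegrable_of_integrableOn_Ioi hint (le_add_of_nonneg_right hh)
    (le_add_of_nonneg_right hh)
  have hshift := hint₂.comp_add_right (1 / (2 * k))
  simp only [add_sub_cancel_right] at hshift
  rw [show a + 1 / k = a + 1 / (2 * k) + 1 / (2 * k) by field_simp; ring,
    ← intervalIntegral.integral_add_adjacent_intervals hint₁ hint₂,
    ← intervalIntegral.integral_comp_add_right _ (1 / (2 * k)),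
    ← intervalIntegral.integral_add hint₁ hshift]
  congr 1
  ext s
  rw [sin_two_pi_mul_add_half_period hk.ne']
  ring

lemma half_period_integrand_nonneg (hf : AntitoneOn f (Ioi 0)) (hk : 0 < k) (m : ℕ) {s : ℝ}
    (hs : s ∈ Icc (m / k) (m / k + 1 / (2 * k))) :
    0 ≤ (f s - f (s + 1 / (2 * k))) * sin (2 * π * k * s) := by
  rcases (show (0 : ℝ) ≤ s from le_trans (by positivity) hs.1).eq_or_lt with rfl | hs₀
  · simp
  refine mul_nonneg (sub_nonneg.2 <| hf hs₀ ?_ ?_) (sin_two_pi_mul_nonneg hk m hs)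
  · exact mem_Ioi.2 (by positivity)
  · exact le_add_of_nonneg_right (by positivity)

lemma integral_period_mul_sin_nonneg (hf : AntitoneOn f (Ioi 0)) (hk : 0 < k) (m : ℕ)
    (hint : IntegrableOn (fun s => f s * sin (2 * π * k * s)) (Ioi 0)) :
    0 ≤ ∫ s in m / k..(m + 1) / k, f s * sin (2 * π * k * s) := by
  rw [add_div, integral_period_mul_sin_eq hk (hint.mono_set (Ioi_subset_Ioi (by positivity)))]
  exact intervalIntegral.integral_nonneg (le_add_of_nonneg_right (by positivity))
    fun s hs => half_period_integrand_nonneg hf hk m hs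

/-- Jordan's inequality bounds the sine from below on `[b, 2b]`; antitonicity bounds the
difference of `f`, since `s + 1/(2k) ≥ 1/(2k) ≥ 4b`. -/
lemma le_integral_half_period (hf : AntitoneOn f (Ioi 0)) (hk : 0 < k) {b : ℝ} (hb : 0 < b)
    (hkb : 8 * k * b ≤ 1) (hint : IntegrableOn (fun s => f s * sin (2 * π * k * s)) (Ioi 0)) :
    4 * k * b ^ 2 * (f (2 * b) - f (3 * b)) ≤
      ∫ s in 0..1 / (2 * k), (f s - f (s + 1 / (2 * k))) * sin (2 * π * k * s) := by
  have h4b : 4 * b ≤ 1 / (2 * k) := by rw [le_div_iff₀ (by positivity)]; linarith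
  have hband : ∀ s ∈ Icc b (2 * b),
      (f (2 * b) - f (3 * b)) * (4 * k * b) ≤
        (f s - f (s + 1 / (2 * k))) * sin (2 * π * k * s) := by
    rintro s ⟨hbs, hsb⟩
    have hs : 0 < s := hb.trans_le hbs
    have hf₁ : f (2 * b) ≤ f s := hf hs (mem_Ioi.2 (by positivity)) hsb
    have hf₂ : f (s + 1 / (2 * k)) ≤ f (3 * b) :=
      hf (mem_Ioi.2 (by positivity)) (mem_Ioi.2 (by positivity)) (by linarith)
    have hsin : 4 * k * b ≤ sin (2 * π * k * s) := by
      refine le_trans ?_ (mul_le_sin (by positivity) ?_)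
      · rw [show 2 / π * (2 * π * k * s) = 4 * k * s by field_simp; ring]
        gcongr
      · have : k * s ≤ 1 / 4 := by nlinarith [mul_le_mul_of_nonneg_left hsb hk.le]
        nlinarith [mul_le_mul_of_nonneg_left this pi_pos.le]
    have : 0 ≤ f (2 * b) - f (3 * b) :=
      sub_nonneg.2 (hf (mem_Ioi.2 (by positivity)) (mem_Ioi.2 (by positivity)) (by linarith))
    exact mul_le_mul (by linarith) hsin (by positivity) (by linarith)
  have hint' := zero_add (1 / (2 * k)) ▸ intervalIntegrable_half_period_integrand hk hint
  calc 4 * k * b ^ 2 * (f (2 * b) - f (3 * b))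
      = (2 * b - b) * ((f (2 * b) - f (3 * b)) * (4 * k * b)) := by ring
    _ ≤ ∫ s in b..2 * b, (f s - f (s + 1 / (2 * k))) * sin (2 * π * k * s) := by
      have hsub : uIcc b (2 * b) ⊆ uIcc 0 (1 / (2 * k)) := by
        rw [uIcc_of_le (by linarith), uIcc_of_le (by positivity)]
        exact Icc_subset_Icc hb.le (by linarith)
      have h := intervalIntegral.integral_mono_on (by linarith) intervalIntegrable_const
        (hint'.mono_set hsub) hband
      rwa [intervalIntegral.integral_const, smul_eq_mul] at h
    _ ≤ _ := by
      refine intervalIntegral.integral_mono_interval hb.le (by linarith) (by linarith) ?_ hint'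
      filter_upwards [ae_restrict_mem measurableSet_Ioc] with s hs
      simpa using half_period_integrand_nonneg hf hk 0 (s := s)
        (by simpa using Ioc_subset_Icc_self hs)

lemma le_integral_Ioi_mul_sin (hf : AntitoneOn f (Ioi 0)) {R : ℝ} (hR : ∀ s, R ≤ s → f s = 0)
    (hint : IntegrableOn (fun s => f s * sin (2 * π * k * s)) (Ioi 0)) (hk : 0 < k) {b : ℝ}
    (hb : 0 < b) (hkb : 8 * k * b ≤ 1) :
    4 * k * b ^ 2 * (f (2 * b) - f (3 * b)) ≤ ∫ s in Ioi 0, f s * sin (2 * π * k * s) := by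
  obtain ⟨N, hN⟩ := exists_nat_ge (R * k)
  have hIoi : ∫ s in Ioi 0, f s * sin (2 * π * k * s) =
      ∫ s in (0 : ℝ)..(N + 1) / k, f s * sin (2 * π * k * s) := by
    rw [intervalIntegral.integral_of_le (by positivity)]
    refine setIntegral_eq_of_subset_of_forall_sdiff_eq_zero measurableSet_Ioi Ioc_subset_Ioi_self ?_
    rintro s ⟨hs₀, hs⟩
    have hNs : (N + 1) / k < s := by simpa [mem_Ioi.1 hs₀] using hs
    have hRN : R ≤ (N + 1) / k := by rw [le_div_iff₀ hk]; linarith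
    rw [hR s (hRN.trans hNs.le), zero_mul]
  have hsum := intervalIntegral.sum_integral_adjacent_intervals (a := fun m : ℕ => (m : ℝ) / k)
    (n := N + 1) (f := fun s => f s * sin (2 * π * k * s)) fun m _ =>
      intervalIntegrable_of_integrableOn_Ioi hint (by positivity) (by gcongr; simp)
  calc 4 * k * b ^ 2 * (f (2 * b) - f (3 * b))
      ≤ ∫ s in 0..1 / (2 * k), (f s - f (s + 1 / (2 * k))) * sin (2 * π * k * s) :=
        le_integral_half_period hf hk hb hkb hint
    _ = ∫ s in (0 : ℝ)..1 / k, f s * sin (2 * π * k * s) := by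
        simpa using (integral_period_mul_sin_eq hk hint).symm
    _ ≤ ∑ m ∈ Finset.range (N + 1), ∫ s in (m : ℝ) / k..(m + 1) / k, f s * sin (2 * π * k * s) := by
        simpa using Finset.single_le_sum (fun m _ => integral_period_mul_sin_nonneg hf hk m hint)
          (Finset.mem_range.2 N.succ_pos)
    _ = ∫ s in Ioi 0, f s * sin (2 * π * k * s) := by
        rw [hIoi]; push_cast at hsum ⊢; simpa using hsum

lemma integrableOn_div_mul_sin {g : ℝ → ℝ} (hg : IntegrableOn g (Ioi 0)) (k : ℝ) :
    IntegrableOn (fun s => g s / s * sin (2 * π * k * s)) (Ioi 0) := by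
  refine Integrable.mono' (hg.norm.const_mul (2 * π * |k|)) ?_ ?_
  · have : AEStronglyMeasurable (fun s : ℝ => s⁻¹ * sin (2 * π * k * s))
        (volume.restrict (Ioi 0)) := (measurable_inv.mul (by fun_prop)).aestronglyMeasurable
    convert hg.aestronglyMeasurable.mul this using 1
    ext s
    rw [Pi.mul_apply, div_eq_mul_inv, mul_assoc]
  · filter_upwards [ae_restrict_mem measurableSet_Ioi] with s (hs : 0 < s)
    calc ‖g s / s * sin (2 * π * k * s)‖ = |g s| / s * |sin (2 * π * k * s)| := by
          rw [Real.norm_eq_abs, abs_mul, abs_div, abs_of_pos hs]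
      _ ≤ |g s| / s * |2 * π * k * s| :=
          mul_le_mul_of_nonneg_left abs_sin_le_abs (by positivity)
      _ = 2 * π * |k| * ‖g s‖ := by
          rw [Real.norm_eq_abs, abs_mul, abs_mul, abs_of_pos hs, abs_of_pos two_pi_pos]
          field_simp

end Oscillation

section Kernel

variable {ρ : ℝ → ℝ}

lemma integrable_of_integral_Ioo_eq_one (hsupp : ∀ s, s ∉ Ioo (-1 : ℝ) 1 → ρ s = 0)
    (hnorm : ∫ s in Ioo (-1 : ℝ) 1, ρ s = 1) : Integrable ρ := by
  have hint : IntegrableOn ρ (Ioo (-1) 1) := by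
    by_contra h
    rw [integral_undef h] at hnorm
    exact zero_ne_one hnorm
  exact (integrableOn_iff_integrable_of_support_subset
    fun s hs => by_contra fun h => hs (hsupp s h)).1 hint

lemma scaled_eq_zero_of_le (hsupp : ∀ s, s ∉ Ioo (-1 : ℝ) 1 → ρ s = 0) {δ s : ℝ} (hδ : 0 < δ)
    (hs : δ ≤ s) : δ⁻¹ * ρ (s / δ) = 0 := by
  rw [hsupp _ fun h => (h.2.trans_le ((one_le_div hδ).2 hs)).false, mul_zero]

lemma antitoneOn_div_self_Ioi (hnn : ∀ s, 0 ≤ ρ s) (hsupp : ∀ s, s ∉ Ioo (-1 : ℝ) 1 → ρ s = 0)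
    (hanti : AntitoneOn (fun s => ρ s / s) (Ioo 0 1)) : AntitoneOn (fun s => ρ s / s) (Ioi 0) := by
  intro x (hx : 0 < x) y (hy : 0 < y) hxy
  rcases lt_or_ge y 1 with hy1 | hy1
  · exact hanti ⟨hx, hxy.trans_lt hy1⟩ ⟨hy, hy1⟩ hxy
  · simp only [hsupp y fun h => h.2.not_ge hy1, zero_div]
    exact div_nonneg (hnn x) hx.le

lemma antitoneOn_scaled_div_self (hanti : AntitoneOn (fun s => ρ s / s) (Ioi 0)) {δ : ℝ}
    (hδ : 0 < δ) : AntitoneOn (fun s => δ⁻¹ * ρ (s / δ) / s) (Ioi 0) := by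
  have h : ∀ s, δ⁻¹ * ρ (s / δ) / s = δ⁻¹ ^ 2 * (ρ (s / δ) / (s / δ)) := fun s => by
    rw [div_div_eq_mul_div]; field_simp
  intro x (hx : 0 < x) y (hy : 0 < y) hxy
  simp only [h]
  exact mul_le_mul_of_nonneg_left (hanti (div_pos hx hδ) (div_pos hy hδ) (by gcongr))
    (by positivity)

lemma rpow_neg_div_two_sub_rpow_neg_div_three_pos {α : ℝ} (hα : 0 ≤ α) :
    0 < (2 : ℝ) ^ (-α) / 2 - (3 : ℝ) ^ (-α) / 3 := by
  have h₂₃ : (3 : ℝ) ^ (-α) ≤ 2 ^ (-α) := rpow_le_rpow_of_nonpos two_pos (by norm_num) (by linarith)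
  have : 0 < (3 : ℝ) ^ (-α) := by positivity
  linarith

lemma fractional_kernel_bound {c α ε : ℝ} (hc : 0 ≤ c) (hα : 0 ≤ α)
    (hfrac : ∀ s ∈ Ioo 0 ε, ρ s = c * s ^ (-α)) {y : ℝ} (hy : 0 < y) (hy1 : y ≤ 1)
    (hyε : 3 * y < ε) :
    c * ((2 : ℝ) ^ (-α) / 2 - (3 : ℝ) ^ (-α) / 3) * y ≤
      y ^ 2 * (ρ (2 * y) / (2 * y) - ρ (3 * y) / (3 * y)) := by
  have hκ := rpow_neg_div_two_sub_rpow_neg_div_three_pos hα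
  have hyα : 1 ≤ y ^ (-α) := one_le_rpow_of_pos_of_le_one_of_nonpos hy hy1 (by linarith)
  rw [hfrac _ ⟨by positivity, by linarith⟩, hfrac _ ⟨by positivity, hyε⟩,
    mul_rpow two_pos.le hy.le, mul_rpow (by norm_num) hy.le]
  calc c * ((2 : ℝ) ^ (-α) / 2 - (3 : ℝ) ^ (-α) / 3) * y
      ≤ c * ((2 : ℝ) ^ (-α) / 2 - (3 : ℝ) ^ (-α) / 3) * y * y ^ (-α) :=
        le_mul_of_one_le_right (by positivity) hyα
    _ = _ := by field_simp

lemma le_integral_scaled_div_mul_sin {c α ε η : ℝ} (hρ : Integrable ρ)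
    (hsupp : ∀ s, s ∉ Ioo (-1 : ℝ) 1 → ρ s = 0) (hanti : AntitoneOn (fun s => ρ s / s) (Ioi 0))
    (hc : 0 ≤ c) (hα : 0 ≤ α) (hfrac : ∀ s ∈ Ioo 0 ε, ρ s = c * s ^ (-α)) (hη : 0 < η)
    (hη1 : η ≤ 1) (hηε : η ≤ ε) {δ : ℝ} (hδ : 0 < δ) (hδ1 : δ ≤ 1) (hk : 1 ≤ k) :
    c * ((2 : ℝ) ^ (-α) / 2 - (3 : ℝ) ^ (-α) / 3) * η / 2 ≤
      ∫ s in Ioi 0, δ⁻¹ * ρ (s / δ) / s * sin (2 * π * k * s) := by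
  have hκ := rpow_neg_div_two_sub_rpow_neg_div_three_pos hα
  set κ := (2 : ℝ) ^ (-α) / 2 - (3 : ℝ) ^ (-α) / 3
  have hk₀ : 0 < k := one_pos.trans_le hk
  set y := min (η / 4) (1 / (8 * (k * δ)))
  have hy : 0 < y := lt_min (by positivity) (by positivity)
  have hyη : y ≤ η / 4 := min_le_left _ _
  have hy8 : 8 * (k * δ) * y ≤ 1 := by
    rw [← le_div_iff₀' (by positivity)]; exact min_le_right _ _
  have hky : η / 8 ≤ k * y := by
    rcases min_choice (η / 4) (1 / (8 * (k * δ))) with h | h <;> rw [show y = _ from h]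
    · nlinarith
    · rw [show k * (1 / (8 * (k * δ))) = 1 / (8 * δ) by field_simp, le_div_iff₀ (by positivity)]
      nlinarith
  have hg := ((hρ.comp_div hδ.ne').const_mul δ⁻¹).integrableOn (s := Ioi 0)
  have hband := le_integral_Ioi_mul_sin (antitoneOn_scaled_div_self hanti hδ)
    (fun s hs => by rw [scaled_eq_zero_of_le hsupp hδ hs, zero_div]) (integrableOn_div_mul_sin hg k)
    hk₀ (b := δ * y) (by positivity) (by linarith)
  have hrescale : 4 * k * (δ * y) ^ 2 * (δ⁻¹ * ρ (2 * (δ * y) / δ) / (2 * (δ * y)) -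
      δ⁻¹ * ρ (3 * (δ * y) / δ) / (3 * (δ * y))) =
      4 * k * (y ^ 2 * (ρ (2 * y) / (2 * y) - ρ (3 * y) / (3 * y))) := by
    have h₂ : 2 * (δ * y) / δ = 2 * y := by field_simp
    have h₃ : 3 * (δ * y) / δ = 3 * y := by field_simp
    rw [h₂, h₃]
    field_simp
  calc c * κ * η / 2 ≤ 4 * k * (c * κ * y) := by
        nlinarith [mul_le_mul_of_nonneg_left hky (by positivity : 0 ≤ c * κ)]
    _ ≤ 4 * k * (y ^ 2 * (ρ (2 * y) / (2 * y) - ρ (3 * y) / (3 * y))) :=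
      mul_le_mul_of_nonneg_left (fractional_kernel_bound hc hα hfrac hy (by linarith)
        (by linarith)) (by positivity)
    _ ≤ _ := hrescale ▸ hband

end Kernel

theorem symbol_uniform_lower_bound_general (ρ : ℝ → ℝ) (c α ε : ℝ)
    (hc : 0 < c) (hα : α ∈ Ioo (0 : ℝ) 1) (hε : 0 < ε)
    (hnn : ∀ s, 0 ≤ ρ s)
    (hsupp : ∀ s, s ∉ Ioo (-1 : ℝ) 1 → ρ s = 0)
    (hnorm : (∫ s in Ioo (-1 : ℝ) 1, ρ s) = 1)
    (hanti : AntitoneOn (fun s => ρ s / s) (Ioo (0 : ℝ) 1))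
    (hfrac : ∀ s ∈ Ioo 0 ε, ρ s = c * s ^ (-α)) :
    ∃ C > 0, ∀ δ ∈ Ioc (0 : ℝ) 1, ∀ k : ℕ, 0 < k →
      C ≤ 2 * ∫ s in Ioo 0 δ, (δ⁻¹ * ρ (s / δ)) / s * Real.sin (2 * π * k * s) := by
  have hκ := rpow_neg_div_two_sub_rpow_neg_div_three_pos hα.1.le
  refine ⟨c * ((2 : ℝ) ^ (-α) / 2 - (3 : ℝ) ^ (-α) / 3) * min ε 1,
    by positivity, fun δ ⟨hδ, hδ1⟩ k hk => ?_⟩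
  have hIoi : ∫ s in Ioi 0, δ⁻¹ * ρ (s / δ) / s * sin (2 * π * k * s) =
      ∫ s in Ioo 0 δ, δ⁻¹ * ρ (s / δ) / s * sin (2 * π * k * s) :=
    setIntegral_eq_of_subset_of_forall_sdiff_eq_zero measurableSet_Ioi Ioo_subset_Ioi_self
      fun s ⟨hs₀, hs⟩ => by
        rw [scaled_eq_zero_of_le hsupp hδ (not_lt.1 fun h => hs ⟨hs₀, h⟩), zero_div, zero_mul]
  have h := le_integral_scaled_div_mul_sin (integrable_of_integral_Ioo_eq_one hsupp hnorm) hsupp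
    (antitoneOn_div_self_Ioi hnn hsupp hanti) hc.le hα.1.le hfrac (lt_min hε one_pos)
    (min_le_right _ _) (min_le_left _ _) hδ hδ1 (Nat.one_le_cast.2 hk)
  rw [hIoi] at h
  linarith

theorem symbol_uniform_lower_bound (ρ : ℝ → ℝ) (c α ε : ℝ)
    (hc : 0 < c) (hα : α ∈ Ioo (0 : ℝ) 1) (hε : 0 < ε)
    (hnn : ∀ s, 0 ≤ ρ s)
    (hsupp : ∀ s, s ∉ Ioo (-1 : ℝ) 1 → ρ s = 0)
    (heven : ∀ s, ρ (-s) = ρ s)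
    (hnorm : (∫ s in Ioo (-1 : ℝ) 1, ρ s) = 1)
    (hanti : AntitoneOn (fun s => ρ s / s) (Ioo (0 : ℝ) 1))
    (hfrac : ∀ s ∈ Ioo 0 ε, ρ s = c * s ^ (-α)) :
    ∃ C > 0, ∀ δ ∈ Ioc (0 : ℝ) 1, ∀ k : ℕ, 0 < k →
      C ≤ 2 * ∫ s in Ioo 0 δ, (δ⁻¹ * ρ (s / δ)) / s * Real.sin (2 * π * k * s) :=
  symbol_uniform_lower_bound_general ρ c α ε hc hα hε hnn hsupp hnorm hanti hfrac
end
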